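/- Let z, w ∈ B, let ξ ∈ ∂B, and let (x_n) be a sequence in B converging in ℂ² to ξ such that the real sequence d(x_n, z)² − d(x_n, w)² is bounded. Then B_ξ(z) = B_ξ(w). -/

import Mathlib

open Filter Topology

noncomputable section

/-- The inverse hyperbolic cosine on `[1, ∞)`. -/
def arcosh (s : ℝ) : ℝ := Real.log (s + Real.sqrt (s ^ 2 - 1))

/-- The Bergman distance on the unit ball model of the complex hyperbolic plane. -/
def bergmanDist (x z : EuclideanSpace ℂ (Fin 2)) : ℝ :=
  2 * arcosh (‖(inner ℂ x z : ℂ) - 1‖ /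
    Real.sqrt ((1 - ‖x‖ ^ 2) * (1 - ‖z‖ ^ 2)))

/-- The Busemann function of a boundary point `ξ` based at the origin. -/
def busemann (ξ z : EuclideanSpace ℂ (Fin 2)) : ℝ :=
  Real.log ((1 - ‖z‖ ^ 2) / ‖(inner ℂ z ξ : ℂ) - 1‖ ^ 2)

lemma arcosh_div {c t : ℝ} (hc : 0 < c) (ht : 0 < t) :
    arcosh (c / t) = Real.log (c + Real.sqrt (c ^ 2 - t ^ 2)) - Real.log t := by
  have h1 : (c / t) ^ 2 - 1 = (c ^ 2 - t ^ 2) / t ^ 2 := by field_simp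
  have h2 : Real.sqrt ((c / t) ^ 2 - 1) = Real.sqrt (c ^ 2 - t ^ 2) / t := by
    rw [h1, Real.sqrt_div' _ (by positivity), Real.sqrt_sq ht.le]
  have h3 : c / t + Real.sqrt (c ^ 2 - t ^ 2) / t =
      (c + Real.sqrt (c ^ 2 - t ^ 2)) / t := by ring
  have h4 : 0 < c + Real.sqrt (c ^ 2 - t ^ 2) := by positivity
  rw [arcosh, h2, h3, Real.log_div h4.ne' ht.ne']

lemma abs_inner_sub_one_pos {v z : EuclideanSpace ℂ (Fin 2)} (hv : ‖v‖ ≤ 1) (hz : ‖z‖ < 1) :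
    0 < ‖(inner ℂ v z : ℂ) - 1‖ := by
  have h : ‖(inner ℂ v z : ℂ)‖ < 1 := by
    calc ‖(inner ℂ v z : ℂ)‖ = ‖(inner ℂ v z : ℂ)‖ := rfl
    _ ≤ ‖v‖ * ‖z‖ := norm_inner_le_norm v z
    _ ≤ 1 * ‖z‖ := by nlinarith [norm_nonneg z]
    _ < 1 := by simpa using hz
  have hne : (inner ℂ v z : ℂ) ≠ 1 := by
    intro h1; rw [h1] at h; simp at h
  simpa [sub_ne_zero] using (norm_pos_iff.mpr (sub_ne_zero.mpr hne))

theorem busemann_eq_of_bounded_sq_dist_diff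
    (z w : EuclideanSpace ℂ (Fin 2)) (hz : ‖z‖ < 1) (hw : ‖w‖ < 1)
    (ξ : EuclideanSpace ℂ (Fin 2)) (hξ : ‖ξ‖ = 1)
    (x : ℕ → EuclideanSpace ℂ (Fin 2)) (hx : ∀ n, ‖x n‖ < 1)
    (hconv : Filter.Tendsto x Filter.atTop (nhds ξ))
    (hbd : ∃ C : ℝ, ∀ n, |bergmanDist (x n) z ^ 2 - bergmanDist (x n) w ^ 2| ≤ C) :
    busemann ξ z = busemann ξ w := by
  -- notation
  set t : ℕ → ℝ := fun n => Real.sqrt (1 - ‖x n‖ ^ 2) with ht_def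
  set cz : ℕ → ℝ := fun n => ‖(inner ℂ (x n) z : ℂ) - 1‖ / Real.sqrt (1 - ‖z‖ ^ 2)
    with hcz_def
  set cw : ℕ → ℝ := fun n => ‖(inner ℂ (x n) w : ℂ) - 1‖ / Real.sqrt (1 - ‖w‖ ^ 2)
    with hcw_def
  set a : ℝ := ‖(inner ℂ ξ z : ℂ) - 1‖ / Real.sqrt (1 - ‖z‖ ^ 2) with ha_def
  set b : ℝ := ‖(inner ℂ ξ w : ℂ) - 1‖ / Real.sqrt (1 - ‖w‖ ^ 2) with hb_def
  have hrz : (0:ℝ) < 1 - ‖z‖ ^ 2 := by nlinarith [norm_nonneg z]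
  have hrw : (0:ℝ) < 1 - ‖w‖ ^ 2 := by nlinarith [norm_nonneg w]
  have ha : 0 < a := div_pos (abs_inner_sub_one_pos hξ.le hz) (Real.sqrt_pos.2 hrz)
  have hb : 0 < b := div_pos (abs_inner_sub_one_pos hξ.le hw) (Real.sqrt_pos.2 hrw)
  have htpos : ∀ n, 0 < t n := fun n => Real.sqrt_pos.2 (by nlinarith [norm_nonneg (x n), hx n])
  have hczpos : ∀ n, 0 < cz n :=
    fun n => div_pos (abs_inner_sub_one_pos (hx n).le hz) (Real.sqrt_pos.2 hrz)
  have hcwpos : ∀ n, 0 < cw n :=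
    fun n => div_pos (abs_inner_sub_one_pos (hx n).le hw) (Real.sqrt_pos.2 hrw)
  -- convergence of auxiliary sequences
  have hnorm : Tendsto (fun n => ‖x n‖) atTop (𝓝 1) := by
    simpa [hξ, Function.comp_def] using (continuous_norm.tendsto ξ).comp hconv
  have ht0 : Tendsto t atTop (𝓝 0) := by
    have : Tendsto (fun n => 1 - ‖x n‖ ^ 2) atTop (𝓝 0) := by
      have := (tendsto_const_nhds (x := (1:ℝ)) (f := atTop)).sub (hnorm.pow 2)
      simpa using this
    have h := (Real.continuous_sqrt.tendsto 0).comp this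
    simpa [Function.comp_def] using h
  have hcz_lim : Tendsto cz atTop (𝓝 a) := by
    have h1 : Tendsto (fun n => (inner ℂ (x n) z : ℂ)) atTop (𝓝 (inner ℂ ξ z : ℂ)) :=
      ((continuous_id.inner continuous_const).tendsto ξ).comp hconv
    exact (((continuous_norm.tendsto _).comp (h1.sub tendsto_const_nhds)).div_const _)
  have hcw_lim : Tendsto cw atTop (𝓝 b) := by
    have h1 : Tendsto (fun n => (inner ℂ (x n) w : ℂ)) atTop (𝓝 (inner ℂ ξ w : ℂ)) :=
      ((continuous_id.inner continuous_const).tendsto ξ).comp hconv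
    exact (((continuous_norm.tendsto _).comp (h1.sub tendsto_const_nhds)).div_const _)
  -- expressing the distances
  have hdz : ∀ n, bergmanDist (x n) z =
      2 * (Real.log (cz n + Real.sqrt (cz n ^ 2 - t n ^ 2)) - Real.log (t n)) := by
    intro n
    have hs : Real.sqrt ((1 - ‖x n‖ ^ 2) * (1 - ‖z‖ ^ 2)) = t n * Real.sqrt (1 - ‖z‖ ^ 2) :=
      Real.sqrt_mul (by nlinarith [hx n, norm_nonneg (x n)]) _
    have : ‖(inner ℂ (x n) z : ℂ) - 1‖ /
        Real.sqrt ((1 - ‖x n‖ ^ 2) * (1 - ‖z‖ ^ 2)) = cz n / t n := by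
      rw [hs, hcz_def]
      rw [mul_comm, ← div_div]
    rw [bergmanDist, this, arcosh_div (hczpos n) (htpos n)]
  have hdw : ∀ n, bergmanDist (x n) w =
      2 * (Real.log (cw n + Real.sqrt (cw n ^ 2 - t n ^ 2)) - Real.log (t n)) := by
    intro n
    have hs : Real.sqrt ((1 - ‖x n‖ ^ 2) * (1 - ‖w‖ ^ 2)) = t n * Real.sqrt (1 - ‖w‖ ^ 2) :=
      Real.sqrt_mul (by nlinarith [hx n, norm_nonneg (x n)]) _
    have : ‖(inner ℂ (x n) w : ℂ) - 1‖ /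
        Real.sqrt ((1 - ‖x n‖ ^ 2) * (1 - ‖w‖ ^ 2)) = cw n / t n := by
      rw [hs, hcw_def]
      rw [mul_comm, ← div_div]
    rw [bergmanDist, this, arcosh_div (hcwpos n) (htpos n)]
  -- limits of the G-terms
  have hGz : Tendsto (fun n => Real.log (cz n + Real.sqrt (cz n ^ 2 - t n ^ 2))) atTop
      (𝓝 (Real.log (2 * a))) := by
    have h1 : Tendsto (fun n => cz n + Real.sqrt (cz n ^ 2 - t n ^ 2)) atTop (𝓝 (2 * a)) := by
      have h2 : Tendsto (fun n => cz n ^ 2 - t n ^ 2) atTop (𝓝 (a ^ 2)) := by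
        have := (hcz_lim.pow 2).sub (ht0.pow 2)
        simpa using this
      have h3 : Tendsto (fun n => Real.sqrt (cz n ^ 2 - t n ^ 2)) atTop (𝓝 a) := by
        have := (Real.continuous_sqrt.tendsto _).comp h2
        simpa [Real.sqrt_sq ha.le, Function.comp_def] using this
      have := hcz_lim.add h3
      convert this using 2
      ring
    exact ((Real.continuousAt_log (by positivity)).tendsto).comp h1
  have hGw : Tendsto (fun n => Real.log (cw n + Real.sqrt (cw n ^ 2 - t n ^ 2))) atTop
      (𝓝 (Real.log (2 * b))) := by
    have h1 : Tendsto (fun n => cw n + Real.sqrt (cw n ^ 2 - t n ^ 2)) atTop (𝓝 (2 * b)) := by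
      have h2 : Tendsto (fun n => cw n ^ 2 - t n ^ 2) atTop (𝓝 (b ^ 2)) := by
        have := (hcw_lim.pow 2).sub (ht0.pow 2)
        simpa using this
      have h3 : Tendsto (fun n => Real.sqrt (cw n ^ 2 - t n ^ 2)) atTop (𝓝 b) := by
        have := (Real.continuous_sqrt.tendsto _).comp h2
        simpa [Real.sqrt_sq hb.le, Function.comp_def] using this
      have := hcw_lim.add h3
      convert this using 2
      ring
    exact ((Real.continuousAt_log (by positivity)).tendsto).comp h1
  -- log t n → -∞
  have hlogt : Tendsto (fun n => Real.log (t n)) atTop atBot := by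
    apply Real.tendsto_log_nhdsGT_zero.comp
    rw [tendsto_nhdsWithin_iff]
    exact ⟨ht0, Filter.Eventually.of_forall fun n => htpos n⟩
  -- the difference converges
  have hdiff : Tendsto (fun n => bergmanDist (x n) z - bergmanDist (x n) w) atTop
      (𝓝 (2 * Real.log (2 * a) - 2 * Real.log (2 * b))) := by
    have : (fun n => bergmanDist (x n) z - bergmanDist (x n) w) =
        fun n => 2 * Real.log (cz n + Real.sqrt (cz n ^ 2 - t n ^ 2))
          - 2 * Real.log (cw n + Real.sqrt (cw n ^ 2 - t n ^ 2)) := by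
      funext n; rw [hdz n, hdw n]; ring
    rw [this]
    exact (hGz.const_mul 2).sub (hGw.const_mul 2)
  -- the sum tends to +∞
  have hsum : Tendsto (fun n => bergmanDist (x n) z + bergmanDist (x n) w) atTop atTop := by
    have heq : (fun n => bergmanDist (x n) z + bergmanDist (x n) w) =
        fun n => (2 * Real.log (cz n + Real.sqrt (cz n ^ 2 - t n ^ 2))
          + 2 * Real.log (cw n + Real.sqrt (cw n ^ 2 - t n ^ 2)))
          + 4 * (-Real.log (t n)) := by
      funext n; rw [hdz n, hdw n]; ring
    rw [heq]
    have h1 : Tendsto (fun n => 2 * Real.log (cz n + Real.sqrt (cz n ^ 2 - t n ^ 2))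
        + 2 * Real.log (cw n + Real.sqrt (cw n ^ 2 - t n ^ 2))) atTop
        (𝓝 (2 * Real.log (2 * a) + 2 * Real.log (2 * b))) :=
      (hGz.const_mul 2).add (hGw.const_mul 2)
    have h2 : Tendsto (fun n => (4 : ℝ) * (-Real.log (t n))) atTop atTop := by
      have hneg : Tendsto (fun n => -Real.log (t n)) atTop atTop :=
        tendsto_neg_atBot_atTop.comp hlogt
      exact hneg.const_mul_atTop (by norm_num : (0:ℝ) < 4)
    exact h1.add_atTop h2
  -- the limit of the difference must be zero
  have hL : Real.log (2 * a) = Real.log (2 * b) := by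
    by_contra hne
    set L : ℝ := 2 * Real.log (2 * a) - 2 * Real.log (2 * b) with hL_def
    have hLne : L ≠ 0 := by
      simp only [hL_def, sub_ne_zero]
      intro h; exact hne (by linarith)
    obtain ⟨C, hC⟩ := hbd
    have habs : Tendsto (fun n => |bergmanDist (x n) z - bergmanDist (x n) w|) atTop
        (𝓝 |L|) := hdiff.abs
    have hsumabs : Tendsto (fun n => |bergmanDist (x n) z + bergmanDist (x n) w|) atTop
        atTop := tendsto_abs_atTop_atTop.comp hsum
    have hprod : Tendsto (fun n => |bergmanDist (x n) z - bergmanDist (x n) w| *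
        |bergmanDist (x n) z + bergmanDist (x n) w|) atTop atTop :=
      Filter.Tendsto.pos_mul_atTop (abs_pos.2 hLne) habs hsumabs
    have heq : ∀ n, |bergmanDist (x n) z - bergmanDist (x n) w| *
        |bergmanDist (x n) z + bergmanDist (x n) w| =
        |bergmanDist (x n) z ^ 2 - bergmanDist (x n) w ^ 2| := by
      intro n
      rw [← abs_mul]
      congr 1
      ring
    rw [show (fun n => |bergmanDist (x n) z - bergmanDist (x n) w| *
        |bergmanDist (x n) z + bergmanDist (x n) w|) =
        (fun n => |bergmanDist (x n) z ^ 2 - bergmanDist (x n) w ^ 2|) from funext heq] at hprod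
    obtain ⟨n, hn⟩ := (hprod.eventually_gt_atTop C).exists
    exact absurd (hC n) (not_le.2 hn)
  -- conclude a = b
  have hab : a = b := by
    have := congrArg Real.exp hL
    rw [Real.exp_log (by positivity), Real.exp_log (by positivity)] at this
    linarith
  -- finish
  have hswap : ∀ v : EuclideanSpace ℂ (Fin 2),
      ‖(inner ℂ v ξ : ℂ) - 1‖ = ‖(inner ℂ ξ v : ℂ) - 1‖ := by
    intro v
    calc ‖(inner ℂ v ξ : ℂ) - 1‖
        = ‖(starRingEnd ℂ) ((inner ℂ v ξ : ℂ) - 1)‖ := (Complex.norm_conj _).symm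
      _ = ‖(inner ℂ ξ v : ℂ) - 1‖ := by rw [map_sub, map_one, inner_conj_symm]
  have hAz : 0 < ‖(inner ℂ ξ z : ℂ) - 1‖ := abs_inner_sub_one_pos hξ.le hz
  have hAw : 0 < ‖(inner ℂ ξ w : ℂ) - 1‖ := abs_inner_sub_one_pos hξ.le hw
  have hsq : ‖(inner ℂ ξ z : ℂ) - 1‖ ^ 2 / (1 - ‖z‖ ^ 2) =
      ‖(inner ℂ ξ w : ℂ) - 1‖ ^ 2 / (1 - ‖w‖ ^ 2) := by
    have h1 := congrArg (fun r => r ^ 2) hab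
    simp only [ha_def, hb_def, div_pow, Real.sq_sqrt hrz.le, Real.sq_sqrt hrw.le] at h1
    exact h1
  have hfinal : (1 - ‖z‖ ^ 2) / ‖(inner ℂ z ξ : ℂ) - 1‖ ^ 2 =
      (1 - ‖w‖ ^ 2) / ‖(inner ℂ w ξ : ℂ) - 1‖ ^ 2 := by
    rw [hswap z, hswap w]
    rw [div_eq_div_iff (by positivity) (by positivity)]
    rw [div_eq_div_iff (by positivity) (by positivity)] at hsq
    linarith
  rw [busemann, busemann, hfinal]

end
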